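/- arXiv:1805.02562 — 4 statements merged into one kernel-verified Lean document; each statement's English description precedes it below -/
import Mathlib

section
/- Let $H$, $H_1$, $H_2$ be finite-dimensional Hilbert spaces, $A: H_1 \to H$ and $B: H_2 \to H$ linear maps, $c \in H$, and $g: H_2 \to \mathbb{R} \cup \{+\infty\}$ proper, convex, and lower semicontinuous. Define $F(x) = \min_{y \in H_2} \left( \tfrac{1}{2}\|Ax + By + c\|^2 + g(y) \right)$. Then $F$ is differentiable with $\nabla F(x) = A^*(Ax + B y^*(x) + c)$ where $y^*(x)$ is any minimizer, and $\nabla F$ is Lipschitz continuous with Lipschitz constant $\|A\|^2$. -/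
/-!
At a minimizer `y` of `½‖A x + B y + c‖² + g y`, convexity of `g` yields the variational
inequality `g y ≤ g y' + ⟪v, B y' - B y⟫` for the residual `v = A x + B y + c`. Adding it at two
points gives `⟪v₁ - v₂, B y₁ - B y₂⟫ ≤ 0`, and since `v₁ - v₂ = A (x₁ - x₂) + (B y₁ - B y₂)` the
residual is `‖A‖`-Lipschitz in `x`; this is the Lipschitz bound. Evaluating the objective at `x'`
on the minimizer for `x`, and conversely, sandwiches `F x' - F x` between `⟪v, A (x' - x)⟫` and
`⟪v', A (x' - x)⟫` up to `½‖A (x' - x)‖²`, so `F x' - F x - ⟪A* v, x' - x⟫ = O(‖x' - x‖²)`.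
-/

open scoped RealInnerProductSpace
open Filter Topology

lemma le_of_forall_pos_le_one_le_add_mul {a b c : ℝ}
    (h : ∀ t : ℝ, 0 < t → t ≤ 1 → a ≤ b + t * c) : a ≤ b := by
  have hlim : Tendsto (fun t : ℝ => b + t * c) (𝓝[>] 0) (𝓝 b) := by
    have : Tendsto (fun t : ℝ => b + t * c) (𝓝 0) (𝓝 (b + 0 * c)) :=
      (continuous_const.add (continuous_id.mul continuous_const)).tendsto 0
    simpa using this.mono_left nhdsWithin_le_nhds
  refine ge_of_tendsto hlim ?_
  filter_upwards [Ioc_mem_nhdsGT one_pos] with t ht using h t ht.1 ht.2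

lemma EReal.ne_top_of_coe_add_le {a : ℝ} {u w : EReal} (h : (a : EReal) + u ≤ w) (hw : w ≠ ⊤) :
    u ≠ ⊤ := by
  rintro rfl
  rw [EReal.coe_add_top, top_le_iff] at h
  exact hw h

lemma norm_le_of_eq_add_of_inner_nonpos {E : Type*} [NormedAddCommGroup E] [InnerProductSpace ℝ E]
    {d p q : E} (hd : d = p + q) (hq : ⟪d, q⟫ ≤ 0) : ‖d‖ ≤ ‖p‖ := by
  have hsq : ‖d‖ ^ 2 ≤ ‖d‖ * ‖p‖ :=
    calc ‖d‖ ^ 2 = ⟪d, p⟫ + ⟪d, q⟫ := by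
          rw [← inner_add_right, ← hd, real_inner_self_eq_norm_sq]
      _ ≤ ‖d‖ * ‖p‖ := by linarith [real_inner_le_norm d p]
  nlinarith [norm_nonneg d, norm_nonneg p]

lemma hasGradientAt_of_abs_sub_inner_le {E : Type*} [NormedAddCommGroup E] [InnerProductSpace ℝ E]
    [CompleteSpace E] {F : E → ℝ} {x u : E} {C : ℝ}
    (h : ∀ x', |F x' - F x - ⟪u, x' - x⟫| ≤ C * ‖x' - x‖ ^ 2) : HasGradientAt F u x := by
  rw [hasGradientAt_iff_isLittleO]
  refine Asymptotics.IsBigO.trans_isLittleO ?_ (Asymptotics.isLittleO_pow_sub_sub x one_lt_two)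
  refine Asymptotics.IsBigO.of_bound C (Eventually.of_forall fun x' => ?_)
  simpa only [Real.norm_eq_abs, norm_pow, abs_norm] using h x'

section MarginalFunction

variable {H H₁ H₂ : Type*} [NormedAddCommGroup H] [InnerProductSpace ℝ H]
  [NormedAddCommGroup H₁] [NormedSpace ℝ H₁] [AddCommGroup H₂] [Module ℝ H₂] [TopologicalSpace H₂]

noncomputable def jointObjective (A : H₁ →L[ℝ] H) (B : H₂ →L[ℝ] H) (c : H) (g : H₂ → EReal)
    (x : H₁) (y : H₂) : EReal :=
  (((1 / 2 : ℝ) * ‖A x + B y + c‖ ^ 2 : ℝ) : EReal) + g y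

variable {A : H₁ →L[ℝ] H} {B : H₂ →L[ℝ] H} {c : H} {g : H₂ → EReal}

lemma jointObjective_of_eq_coe {x : H₁} {y : H₂} {r : ℝ} (hr : g y = r) :
    jointObjective A B c g x y = ((1 / 2 * ‖A x + B y + c‖ ^ 2 + r : ℝ) : EReal) := by
  rw [jointObjective, hr, EReal.coe_add]

lemma exists_eq_coe_of_isMin (hg_bot : ∀ y, g y ≠ ⊥) (hg_proper : ∃ y, g y ≠ ⊤)
    {x : H₁} {y : H₂} (hmin : ∀ y', jointObjective A B c g x y ≤ jointObjective A B c g x y') :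
    ∃ r : ℝ, g y = r := by
  obtain ⟨y₀, hy₀⟩ := hg_proper
  have hfin : jointObjective A B c g x y₀ ≠ ⊤ := by
    rw [jointObjective_of_eq_coe (EReal.coe_toReal hy₀ (hg_bot y₀)).symm]
    exact EReal.coe_ne_top _
  have hy : g y ≠ ⊤ := EReal.ne_top_of_coe_add_le (hmin y₀) hfin
  exact ⟨(g y).toReal, (EReal.coe_toReal hy (hg_bot y)).symm⟩

lemma le_add_inner_of_isMin
    (hg_convex : ∀ y₁ y₂ : H₂, ∀ t : ℝ, 0 ≤ t → t ≤ 1 →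
      g (t • y₁ + (1 - t) • y₂) ≤ (t : EReal) * g y₁ + ((1 - t : ℝ) : EReal) * g y₂)
    {x : H₁} {y₁ y₂ : H₂} {r₁ r₂ : ℝ} (h₁ : g y₁ = r₁) (h₂ : g y₂ = r₂)
    (hmin : ∀ y, jointObjective A B c g x y₁ ≤ jointObjective A B c g x y) :
    r₁ ≤ r₂ + ⟪A x + B y₁ + c, B y₂ - B y₁⟫ := by
  set v := A x + B y₁ + c
  set w := B y₂ - B y₁
  -- compare `y₁` with `t • y₂ + (1 - t) • y₁` and let `t → 0⁺`
  refine le_of_forall_pos_le_one_le_add_mul (c := ‖w‖ ^ 2 / 2) fun t ht0 ht1 => ?_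
  have hres : A x + B (t • y₂ + (1 - t) • y₁) + c = v + t • w := by
    simp only [v, w, map_add, map_smul]
    module
  have hconv : jointObjective A B c g x (t • y₂ + (1 - t) • y₁) ≤
      ((1 / 2 * ‖v + t • w‖ ^ 2 + (t * r₂ + (1 - t) * r₁) : ℝ) : EReal) :=
    calc _ ≤ (((1 / 2 : ℝ) * ‖v + t • w‖ ^ 2 : ℝ) : EReal) +
          ((t : EReal) * g y₂ + ((1 - t : ℝ) : EReal) * g y₁) := by
          rw [jointObjective, hres]
          exact add_le_add le_rfl (hg_convex _ _ t ht0.le ht1)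
      _ = _ := by rw [h₁, h₂]; norm_cast
  have hreal : 1 / 2 * ‖v‖ ^ 2 + r₁ ≤ 1 / 2 * ‖v + t • w‖ ^ 2 + (t * r₂ + (1 - t) * r₁) := by
    have := (hmin _).trans hconv
    rwa [jointObjective_of_eq_coe h₁, EReal.coe_le_coe_iff] at this
  rw [norm_add_sq_real v (t • w), real_inner_smul_right, norm_smul, Real.norm_eq_abs, mul_pow,
    sq_abs] at hreal
  have : t * r₁ ≤ t * (r₂ + ⟪v, w⟫ + t * (‖w‖ ^ 2 / 2)) := by nlinarith
  exact le_of_mul_le_mul_left this ht0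

lemma value_le_value_add_inner {x x' : H₁} {y y' : H₂} {r r' : ℝ} (hr : g y = r) (hr' : g y' = r')
    (hmin' : ∀ z, jointObjective A B c g x' y' ≤ jointObjective A B c g x' z) :
    1 / 2 * ‖A x' + B y' + c‖ ^ 2 + r' ≤ 1 / 2 * ‖A x + B y + c‖ ^ 2 + r +
      ⟪A x + B y + c, A x' - A x⟫ + 1 / 2 * ‖A x' - A x‖ ^ 2 := by
  have h := hmin' y
  rw [jointObjective_of_eq_coe hr', jointObjective_of_eq_coe hr, EReal.coe_le_coe_iff,
    show A x' + B y + c = (A x + B y + c) + (A x' - A x) by abel,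
    norm_add_sq_real (A x + B y + c)] at h
  linarith

variable (hg_convex : ∀ y₁ y₂ : H₂, ∀ t : ℝ, 0 ≤ t → t ≤ 1 →
      g (t • y₁ + (1 - t) • y₂) ≤ (t : EReal) * g y₁ + ((1 - t : ℝ) : EReal) * g y₂)
  {x₁ x₂ : H₁} {y₁ y₂ : H₂} {r₁ r₂ : ℝ} (h₁ : g y₁ = r₁) (h₂ : g y₂ = r₂)
  (hmin₁ : ∀ y, jointObjective A B c g x₁ y₁ ≤ jointObjective A B c g x₁ y)
  (hmin₂ : ∀ y, jointObjective A B c g x₂ y₂ ≤ jointObjective A B c g x₂ y)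
include hg_convex h₁ h₂ hmin₁ hmin₂

lemma inner_sub_residual_nonpos :
    ⟪(A x₁ + B y₁ + c) - (A x₂ + B y₂ + c), B y₁ - B y₂⟫ ≤ 0 := by
  have h12 := le_add_inner_of_isMin hg_convex h₁ h₂ hmin₁
  have h21 := le_add_inner_of_isMin hg_convex h₂ h₁ hmin₂
  rw [← neg_sub (B y₁), inner_neg_right] at h12
  rw [inner_sub_left]
  linarith

lemma norm_sub_residual_le :
    ‖(A x₁ + B y₁ + c) - (A x₂ + B y₂ + c)‖ ≤ ‖A‖ * ‖x₁ - x₂‖ :=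
  calc _ ≤ ‖A (x₁ - x₂)‖ :=
        norm_le_of_eq_add_of_inner_nonpos (by rw [map_sub]; abel)
          (inner_sub_residual_nonpos hg_convex h₁ h₂ hmin₁ hmin₂)
    _ ≤ ‖A‖ * ‖x₁ - x₂‖ := A.le_opNorm _

lemma abs_value_sub_value_sub_inner_le :
    |(1 / 2 * ‖A x₂ + B y₂ + c‖ ^ 2 + r₂) - (1 / 2 * ‖A x₁ + B y₁ + c‖ ^ 2 + r₁) -
      ⟪A x₁ + B y₁ + c, A x₂ - A x₁⟫| ≤ 3 / 2 * ‖A‖ ^ 2 * ‖x₂ - x₁‖ ^ 2 := by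
  have hup := value_le_value_add_inner (x := x₁) h₁ h₂ hmin₂
  have hlo := value_le_value_add_inner (x := x₂) h₂ h₁ hmin₁
  have hv := norm_sub_residual_le hg_convex h₂ h₁ hmin₂ hmin₁
  have hh : ‖A x₂ - A x₁‖ ≤ ‖A‖ * ‖x₂ - x₁‖ := by rw [← map_sub]; exact A.le_opNorm _
  rw [← neg_sub (A x₂), norm_neg, inner_neg_right] at hlo
  set v₁ := A x₁ + B y₁ + c
  set v₂ := A x₂ + B y₂ + c
  set h := A x₂ - A x₁
  have hcross : |⟪v₂ - v₁, h⟫| ≤ ‖A‖ ^ 2 * ‖x₂ - x₁‖ ^ 2 :=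
    calc |⟪v₂ - v₁, h⟫| ≤ ‖v₂ - v₁‖ * ‖h‖ := abs_real_inner_le_norm _ _
      _ ≤ (‖A‖ * ‖x₂ - x₁‖) * (‖A‖ * ‖x₂ - x₁‖) := by gcongr
      _ = ‖A‖ ^ 2 * ‖x₂ - x₁‖ ^ 2 := by ring
  have hsq : ‖h‖ ^ 2 ≤ ‖A‖ ^ 2 * ‖x₂ - x₁‖ ^ 2 := by rw [← mul_pow]; gcongr
  rw [inner_sub_left, abs_le] at hcross
  rw [abs_le]
  constructor <;> linarith [hcross.1, hcross.2, sq_nonneg ‖h‖]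

end MarginalFunction

theorem stmt_0_general {H H₁ H₂ : Type*}
    [NormedAddCommGroup H] [InnerProductSpace ℝ H] [FiniteDimensional ℝ H]
    [NormedAddCommGroup H₁] [InnerProductSpace ℝ H₁] [FiniteDimensional ℝ H₁]
    [NormedAddCommGroup H₂] [InnerProductSpace ℝ H₂]
    (A : H₁ →L[ℝ] H) (B : H₂ →L[ℝ] H) (c : H) (g : H₂ → EReal)
    -- g is proper (never -∞, somewhere finite):
    (hg_bot : ∀ y, g y ≠ ⊥) (hg_proper : ∃ y, g y ≠ ⊤)
    -- g is convex:
    (hg_convex : ∀ y₁ y₂ : H₂, ∀ t : ℝ, 0 ≤ t → t ≤ 1 →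
      g (t • y₁ + (1 - t) • y₂) ≤ (t : EReal) * g y₁ + ((1 - t : ℝ) : EReal) * g y₂)
    -- the joint functional f(x,y) = ½‖Ax + By + c‖² + g(y):
    (f : H₁ → H₂ → EReal)
    (hf : ∀ x y, f x y = (((1 / 2 : ℝ) * ‖A x + B y + c‖ ^ 2 : ℝ) : EReal) + g y)
    -- a measurable-free selection of minimizers `y*`, with attained finite minimum:
    (ysel : H₁ → H₂)
    (hysel : ∀ x y, f x (ysel x) ≤ f x y)
    -- the marginal function `F x = min_y f(x,y)`:
    (F : H₁ → ℝ) (hF : ∀ x, F x = (f x (ysel x)).toReal) :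
    -- F is differentiable with ∇F(x) = A*(Ax + B y*(x) + c) for *any* minimizer y*(x):
    (∀ x y, (∀ y', f x y ≤ f x y') →
      HasGradientAt F (A.adjoint (A x + B y + c)) x)
    -- and ∇F is Lipschitz continuous with constant ‖A‖²:
    ∧ (∀ x₁ x₂ : H₁,
        ‖A.adjoint (A x₁ + B (ysel x₁) + c) - A.adjoint (A x₂ + B (ysel x₂) + c)‖
          ≤ ‖A‖ ^ 2 * ‖x₁ - x₂‖) := by
  obtain rfl : f = jointObjective A B c g := funext₂ hf
  have hF_eq : ∀ {x y} {r : ℝ}, g y = r → (∀ y', jointObjective A B c g x y ≤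
      jointObjective A B c g x y') → F x = 1 / 2 * ‖A x + B y + c‖ ^ 2 + r := by
    intro x y r hr hmin
    rw [hF, le_antisymm (hysel x y) (hmin (ysel x)), jointObjective_of_eq_coe hr,
      EReal.toReal_coe]
  refine ⟨fun x y hmin => ?_, fun x₁ x₂ => ?_⟩
  · obtain ⟨r, hr⟩ := exists_eq_coe_of_isMin hg_bot hg_proper hmin
    refine hasGradientAt_of_abs_sub_inner_le (C := 3 / 2 * ‖A‖ ^ 2) fun x' => ?_
    obtain ⟨r', hr'⟩ := exists_eq_coe_of_isMin hg_bot hg_proper (hysel x')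
    rw [hF_eq hr hmin, hF_eq hr' (hysel x'), A.adjoint_inner_left, map_sub]
    exact abs_value_sub_value_sub_inner_le hg_convex hr hr' hmin (hysel x')
  · obtain ⟨r₁, h₁⟩ := exists_eq_coe_of_isMin hg_bot hg_proper (hysel x₁)
    obtain ⟨r₂, h₂⟩ := exists_eq_coe_of_isMin hg_bot hg_proper (hysel x₂)
    calc _ = ‖A.adjoint ((A x₁ + B (ysel x₁) + c) - (A x₂ + B (ysel x₂) + c))‖ := by
          rw [map_sub]
      _ ≤ ‖A‖ * ‖(A x₁ + B (ysel x₁) + c) - (A x₂ + B (ysel x₂) + c)‖ := by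
          simpa only [LinearIsometryEquiv.norm_map] using A.adjoint.le_opNorm _
      _ ≤ ‖A‖ * (‖A‖ * ‖x₁ - x₂‖) := by
          gcongr
          exact norm_sub_residual_le hg_convex h₁ h₂ (hysel x₁) (hysel x₂)
      _ = ‖A‖ ^ 2 * ‖x₁ - x₂‖ := by ring

/-- Smoothness of the marginal function `F x = min_y (½‖Ax + By + c‖² + g(y))`
for `g : H₂ → ℝ ∪ {+∞}` proper convex lsc: `F` is differentiable with
`∇F(x) = A*(Ax + B y*(x) + c)` for any minimizer `y*(x)`, and `∇F` is
Lipschitz continuous with constant `L = ‖A‖²`. -/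
theorem stmt_0 {H H₁ H₂ : Type*}
    [NormedAddCommGroup H] [InnerProductSpace ℝ H] [FiniteDimensional ℝ H]
    [NormedAddCommGroup H₁] [InnerProductSpace ℝ H₁] [FiniteDimensional ℝ H₁]
    [NormedAddCommGroup H₂] [InnerProductSpace ℝ H₂] [FiniteDimensional ℝ H₂]
    (A : H₁ →L[ℝ] H) (B : H₂ →L[ℝ] H) (c : H) (g : H₂ → EReal)
    -- g is proper (never -∞, somewhere finite):
    (hg_bot : ∀ y, g y ≠ ⊥) (hg_proper : ∃ y, g y ≠ ⊤)
    -- g is convex: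
    (hg_convex : ∀ y₁ y₂ : H₂, ∀ t : ℝ, 0 ≤ t → t ≤ 1 →
      g (t • y₁ + (1 - t) • y₂) ≤ (t : EReal) * g y₁ + ((1 - t : ℝ) : EReal) * g y₂)
    -- g is lower semicontinuous:
    (hg_lsc : LowerSemicontinuous g)
    -- the joint functional f(x,y) = ½‖Ax + By + c‖² + g(y):
    (f : H₁ → H₂ → EReal)
    (hf : ∀ x y, f x y = (((1 / 2 : ℝ) * ‖A x + B y + c‖ ^ 2 : ℝ) : EReal) + g y)
    -- a measurable-free selection of minimizers `y*`, with attained finite minimum: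
    (ysel : H₁ → H₂)
    (hysel : ∀ x y, f x (ysel x) ≤ f x y) (hyfin : ∀ x, g (ysel x) ≠ ⊤)
    -- the marginal function `F x = min_y f(x,y)`:
    (F : H₁ → ℝ) (hF : ∀ x, F x = (f x (ysel x)).toReal) :
    -- F is differentiable with ∇F(x) = A*(Ax + B y*(x) + c) for *any* minimizer y*(x):
    (∀ x y, (∀ y', f x y ≤ f x y') →
      HasGradientAt F (A.adjoint (A x + B y + c)) x)
    -- and ∇F is Lipschitz continuous with constant ‖A‖²:
    ∧ (∀ x₁ x₂ : H₁,
        ‖A.adjoint (A x₁ + B (ysel x₁) + c) - A.adjoint (A x₂ + B (ysel x₂) + c)‖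
          ≤ ‖A‖ ^ 2 * ‖x₁ - x₂‖) :=
  stmt_0_general A B c g hg_bot hg_proper hg_convex f hf ysel hysel F hF
end

section
/- Let $H$, $H_1$, $H_2$ be finite-dimensional Hilbert spaces, $A: H_1 \to H$, $B: H_2 \to H$ linear, $c \in H$, $g: H_2 \to \mathbb{R} \cup \{+\infty\}$ proper convex lower semicontinuous, $f(x,y) = \tfrac{1}{2}\|Ax+By+c\|^2 + g(y)$, and $F(x) = \min_y f(x,y)$. If $y_1$ minimizes $f(x_1, \cdot)$ and $y_2$ minimizes $f(x_2, \cdot)$, and $d(x_i) = A^*(Ax_i + By_i + c)$, then $F(x_1) \le F(x_2) + \langle d(x_2), x_1 - x_2 \rangle + \tfrac{L}{2}\|x_1 - x_2\|^2$ where $L = \|A\|^2$. -/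
open scoped RealInnerProductSpace

/-- Upper bound (descent-lemma type) inequality for the marginal function
`F x = min_y (½‖Ax + By + c‖² + g(y))` with `g` proper convex lsc
(`EReal`-valued, never `⊥`): if `yᵢ` minimizes `f(xᵢ, ·)` and
`d xᵢ = A*(A xᵢ + B yᵢ + c)`, then
`F x₁ ≤ F x₂ + ⟪d x₂, x₁ - x₂⟫ + (L/2)‖x₁ - x₂‖²` with `L = ‖A‖²`. -/
theorem stmt_1 {H H₁ H₂ : Type*}
    [NormedAddCommGroup H] [InnerProductSpace ℝ H] [FiniteDimensional ℝ H]
    [NormedAddCommGroup H₁] [InnerProductSpace ℝ H₁] [FiniteDimensional ℝ H₁]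
    [NormedAddCommGroup H₂] [InnerProductSpace ℝ H₂] [FiniteDimensional ℝ H₂]
    (A : H₁ →L[ℝ] H) (B : H₂ →L[ℝ] H) (c : H) (g : H₂ → EReal)
    -- g is proper (never -∞, somewhere finite):
    (hg_bot : ∀ y, g y ≠ ⊥) (hg_proper : ∃ y, g y ≠ ⊤)
    -- g is convex:
    (hg_convex : ∀ y₁ y₂ : H₂, ∀ t : ℝ, 0 ≤ t → t ≤ 1 →
      g (t • y₁ + (1 - t) • y₂) ≤ (t : EReal) * g y₁ + ((1 - t : ℝ) : EReal) * g y₂)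
    -- g is lower semicontinuous:
    (hg_lsc : LowerSemicontinuous g)
    -- the joint functional f(x,y) = ½‖Ax + By + c‖² + g(y):
    (f : H₁ → H₂ → EReal)
    (hf : ∀ x y, f x y = (((1 / 2 : ℝ) * ‖A x + B y + c‖ ^ 2 : ℝ) : EReal) + g y)
    (x₁ x₂ : H₁) (y₁ y₂ : H₂)
    -- y₁ minimizes f(x₁, ·) and y₂ minimizes f(x₂, ·), with finite values:
    (hy₁ : ∀ y, f x₁ y₁ ≤ f x₁ y) (hy₂ : ∀ y, f x₂ y₂ ≤ f x₂ y)
    (hy₁fin : g y₁ ≠ ⊤) (hy₂fin : g y₂ ≠ ⊤)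
    (L : ℝ) (hLdef : L = ‖A‖ ^ 2) :
    (f x₁ y₁).toReal ≤ (f x₂ y₂).toReal
      + ⟪A.adjoint (A x₂ + B y₂ + c), x₁ - x₂⟫
      + (L / 2) * ‖x₁ - x₂‖ ^ 2 := by

  obtain ⟨r₁, hr₁⟩ : ∃ r : ℝ, g y₁ = (r : EReal) :=
    ⟨(g y₁).toReal, (EReal.coe_toReal hy₁fin (hg_bot y₁)).symm⟩
  obtain ⟨r₂, hr₂⟩ : ∃ r : ℝ, g y₂ = (r : EReal) :=
    ⟨(g y₂).toReal, (EReal.coe_toReal hy₂fin (hg_bot y₂)).symm⟩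
  have h := hy₁ y₂
  rw [hf, hf, hr₁, hr₂, ← EReal.coe_add, ← EReal.coe_add, EReal.coe_le_coe_iff] at h
  rw [hf, hf, hr₁, hr₂, ← EReal.coe_add, ← EReal.coe_add, EReal.toReal_coe,
    EReal.toReal_coe]
  refine h.trans ?_
  have hexp : A x₁ + B y₂ + c = (A x₂ + B y₂ + c) + A (x₁ - x₂) := by
    rw [map_sub]; abel
  have hadj : ⟪A.adjoint (A x₂ + B y₂ + c), x₁ - x₂⟫
      = ⟪A x₂ + B y₂ + c, A (x₁ - x₂)⟫ := ContinuousLinearMap.adjoint_inner_left _ _ _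
  have hop : ‖A (x₁ - x₂)‖ ^ 2 ≤ L * ‖x₁ - x₂‖ ^ 2 := by
    rw [hLdef, ← mul_pow]
    exact pow_le_pow_left₀ (norm_nonneg _) (A.le_opNorm _) 2
  have hnorm : ‖A x₁ + B y₂ + c‖ ^ 2 = ‖A x₂ + B y₂ + c‖ ^ 2
      + 2 * ⟪A x₂ + B y₂ + c, A (x₁ - x₂)⟫ + ‖A (x₁ - x₂)‖ ^ 2 := by
    rw [hexp]
    simpa [real_inner_comm] using norm_add_sq_real (A x₂ + B y₂ + c) (A (x₁ - x₂))
  rw [hadj]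
  nlinarith [hop, hnorm]
end

section
/- Let $H$, $H_1$, $H_2$ be finite-dimensional Hilbert spaces, $A: H_1 \to H$, $B: H_2 \to H$ linear, $c \in H$, $g$ proper convex lsc, $f(x,y)=\tfrac12\|Ax+By+c\|^2+g(y)$, $F(x)=\min_y f(x,y)$, $L = \|A\|^2 > 0$. If $y_i$ minimizes $f(x_i,\cdot)$ and $d(x_i)=A^*(Ax_i+By_i+c)$ for $i=1,2$, then $F(x_1) \ge F(x_2) + \langle d(x_2), x_1 - x_2\rangle + \tfrac{1}{2L}\|d(x_1)-d(x_2)\|^2$. -/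
/-!
Write `rᵢ = A xᵢ + B yᵢ + c`. Perturbing the minimiser `y₂` towards `y₁` and letting the step go
to `0` gives, by convexity of `g`, the optimality inequality `g y₁ ≥ g y₂ + ⟪r₂, B (y₂ - y₁)⟫`.
Since `A (x₁ - x₂) = (r₁ - r₂) + B (y₂ - y₁)`, expanding `½‖r₁‖²` around `r₂` leaves exactly the
slack `½‖r₁ - r₂‖²`, which dominates `‖A* (r₁ - r₂)‖² / (2‖A‖²)`.
-/

open scoped RealInnerProductSpace
open Filter Topology

theorem nonneg_of_forall_mul_add_sq_mul_nonneg {α β : ℝ}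
    (h : ∀ t : ℝ, 0 < t → t ≤ 1 → 0 ≤ t * α + t ^ 2 * β) : 0 ≤ α := by
  have hdiv : ∀ᶠ t in 𝓝[>] (0 : ℝ), 0 ≤ α + t * β := by
    filter_upwards [Ioo_mem_nhdsGT one_pos] with t ⟨ht₀, ht₁⟩
    exact nonneg_of_mul_nonneg_right (by linarith [h t ht₀ ht₁.le]) ht₀
  have hlim : Tendsto (fun t : ℝ => α + t * β) (𝓝[>] 0) (𝓝 α) := by
    have : Continuous fun t : ℝ => α + t * β := by fun_prop
    simpa using (this.tendsto 0).mono_left nhdsWithin_le_nhds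
  exact ge_of_tendsto hlim hdiv

section Optimality

variable {E F : Type*} [AddCommGroup E] [Module ℝ E]
  [NormedAddCommGroup F] [InnerProductSpace ℝ F]

theorem half_sq_add_le_of_isMin_of_convex (T : E →ₗ[ℝ] F) (w : F) (g : E → EReal)
    (hg_convex : ∀ y₁ y₂ : E, ∀ t : ℝ, 0 ≤ t → t ≤ 1 →
      g (t • y₁ + (1 - t) • y₂) ≤ (t : EReal) * g y₁ + ((1 - t : ℝ) : EReal) * g y₂)
    {y₀ : E} (hmin : ∀ y, (((1 / 2 : ℝ) * ‖w + T y₀‖ ^ 2 : ℝ) : EReal) + g y₀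
      ≤ (((1 / 2 : ℝ) * ‖w + T y‖ ^ 2 : ℝ) : EReal) + g y)
    {a b : ℝ} {y : E} (hy : g y = a) (hy₀ : g y₀ = b) {t : ℝ} (ht₀ : 0 ≤ t) (ht₁ : t ≤ 1) :
    (1 / 2) * ‖w + T y₀‖ ^ 2 + b
      ≤ (1 / 2) * ‖w + T y₀ + t • T (y - y₀)‖ ^ 2 + (t * a + (1 - t) * b) := by
  have hseg : t • y + (1 - t) • y₀ = y₀ + t • (y - y₀) := by
    rw [smul_sub, sub_smul, one_smul]; abel
  have hT : w + T (y₀ + t • (y - y₀)) = w + T y₀ + t • T (y - y₀) := by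
    rw [map_add, map_smul]; abel
  have hconv := hg_convex y y₀ t ht₀ ht₁
  rw [hseg, hy, hy₀] at hconv
  have hle := (hmin (y₀ + t • (y - y₀))).trans (add_le_add le_rfl hconv)
  rw [hT, hy₀] at hle
  exact_mod_cast hle

/-- First-order optimality at a minimiser `y₀` of `y ↦ ½‖w + T y‖² + g y`: `-Tᵀ(w + T y₀)` is a
subgradient of `g` at `y₀`. -/
theorem le_of_isMin_half_sq_add_convex (T : E →ₗ[ℝ] F) (w : F) (g : E → EReal)
    (hg_convex : ∀ y₁ y₂ : E, ∀ t : ℝ, 0 ≤ t → t ≤ 1 →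
      g (t • y₁ + (1 - t) • y₂) ≤ (t : EReal) * g y₁ + ((1 - t : ℝ) : EReal) * g y₂)
    {y₀ : E} (hmin : ∀ y, (((1 / 2 : ℝ) * ‖w + T y₀‖ ^ 2 : ℝ) : EReal) + g y₀
      ≤ (((1 / 2 : ℝ) * ‖w + T y‖ ^ 2 : ℝ) : EReal) + g y)
    {a b : ℝ} {y : E} (hy : g y = a) (hy₀ : g y₀ = b) :
    b + ⟪w + T y₀, T (y₀ - y)⟫ ≤ a := by
  have hu : T (y₀ - y) = -T (y - y₀) := by rw [← map_neg, neg_sub]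
  suffices 0 ≤ ⟪w + T y₀, T (y - y₀)⟫ + a - b by rw [hu, inner_neg_right]; linarith
  refine nonneg_of_forall_mul_add_sq_mul_nonneg (β := ‖T (y - y₀)‖ ^ 2 / 2) fun t ht₀ ht₁ => ?_
  have h := half_sq_add_le_of_isMin_of_convex T w g hg_convex hmin hy hy₀ ht₀.le ht₁
  rw [norm_add_sq_real (w + T y₀), real_inner_smul_right, norm_smul, Real.norm_eq_abs,
    abs_of_pos ht₀] at h
  linarith

end Optimality

theorem ContinuousLinearMap.norm_adjoint_apply_sq_le {E F : Type*}
    [NormedAddCommGroup E] [InnerProductSpace ℝ E] [CompleteSpace E]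
    [NormedAddCommGroup F] [InnerProductSpace ℝ F] [CompleteSpace F]
    (A : E →L[ℝ] F) (z : F) : ‖A.adjoint z‖ ^ 2 ≤ ‖A‖ ^ 2 * ‖z‖ ^ 2 := by
  rw [← mul_pow, ← LinearIsometryEquiv.norm_map ContinuousLinearMap.adjoint A]
  exact pow_le_pow_left₀ (norm_nonneg _) (A.adjoint.le_opNorm z) 2

theorem stmt_2_general {H H₁ H₂ : Type*}
    [NormedAddCommGroup H] [InnerProductSpace ℝ H] [FiniteDimensional ℝ H]
    [NormedAddCommGroup H₁] [InnerProductSpace ℝ H₁] [FiniteDimensional ℝ H₁]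
    [NormedAddCommGroup H₂] [InnerProductSpace ℝ H₂]
    (A : H₁ →L[ℝ] H) (B : H₂ →L[ℝ] H) (c : H) (g : H₂ → EReal)
    -- g is proper (never -∞, somewhere finite):
    (hg_bot : ∀ y, g y ≠ ⊥)
    -- g is convex:
    (hg_convex : ∀ y₁ y₂ : H₂, ∀ t : ℝ, 0 ≤ t → t ≤ 1 →
      g (t • y₁ + (1 - t) • y₂) ≤ (t : EReal) * g y₁ + ((1 - t : ℝ) : EReal) * g y₂)
    -- the joint functional f(x,y) = ½‖Ax + By + c‖² + g(y):
    (f : H₁ → H₂ → EReal)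
    (hf : ∀ x y, f x y = (((1 / 2 : ℝ) * ‖A x + B y + c‖ ^ 2 : ℝ) : EReal) + g y)
    (x₁ x₂ : H₁) (y₁ y₂ : H₂)
    -- y₁ minimizes f(x₁, ·) and y₂ minimizes f(x₂, ·), with finite values:
    (hy₂ : ∀ y, f x₂ y₂ ≤ f x₂ y)
    (hy₁fin : g y₁ ≠ ⊤) (hy₂fin : g y₂ ≠ ⊤)
    (L : ℝ) (hLdef : L = ‖A‖ ^ 2) (hLpos : 0 < L) :
    (f x₁ y₁).toReal ≥ (f x₂ y₂).toReal
      + ⟪A.adjoint (A x₂ + B y₂ + c), x₁ - x₂⟫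
      + (1 / (2 * L)) * ‖A.adjoint (A x₁ + B y₁ + c) - A.adjoint (A x₂ + B y₂ + c)‖ ^ 2 := by
  obtain ⟨a, ha⟩ : ∃ a : ℝ, g y₁ = a := ⟨_, (EReal.coe_toReal hy₁fin (hg_bot y₁)).symm⟩
  obtain ⟨b, hb⟩ : ∃ b : ℝ, g y₂ = b := ⟨_, (EReal.coe_toReal hy₂fin (hg_bot y₂)).symm⟩
  set r₁ := A x₁ + B y₁ + c
  set r₂ := A x₂ + B y₂ + c
  have hF₁ : (f x₁ y₁).toReal = 1 / 2 * ‖r₁‖ ^ 2 + a := by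
    rw [hf, ha, ← EReal.coe_add, EReal.toReal_coe]
  have hF₂ : (f x₂ y₂).toReal = 1 / 2 * ‖r₂‖ ^ 2 + b := by
    rw [hf, hb, ← EReal.coe_add, EReal.toReal_coe]
  have hopt : b + ⟪r₂, B (y₂ - y₁)⟫ ≤ a := by
    have := le_of_isMin_half_sq_add_convex (B : H₂ →ₗ[ℝ] H) (A x₂ + c) g hg_convex
      (fun y => by simpa only [hf, add_right_comm, ContinuousLinearMap.coe_coe] using hy₂ y) ha hb
    rwa [add_right_comm] at this
  have hinner : ⟪A.adjoint r₂, x₁ - x₂⟫ = ⟪r₂, r₁ - r₂⟫ + ⟪r₂, B (y₂ - y₁)⟫ := by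
    rw [A.adjoint_inner_left, ← inner_add_right]
    congr 1
    simp only [r₁, r₂, map_sub]
    abel
  have hsq : ‖r₁‖ ^ 2 = ‖r₂‖ ^ 2 + 2 * ⟪r₂, r₁ - r₂⟫ + ‖r₁ - r₂‖ ^ 2 := by
    simpa using norm_add_sq_real r₂ (r₁ - r₂)
  have hadj : (1 / (2 * L)) * ‖A.adjoint r₁ - A.adjoint r₂‖ ^ 2 ≤ 1 / 2 * ‖r₁ - r₂‖ ^ 2 := by
    rw [← map_sub, div_mul_eq_mul_div, one_mul, div_le_iff₀ (by positivity)]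
    nlinarith [A.norm_adjoint_apply_sq_le (r₁ - r₂)]
  rw [hF₁, hF₂, hinner]
  linarith

/-- Lower bound inequality for the marginal function
`F x = min_y (½‖Ax + By + c‖² + g(y))` with `g` proper convex lsc
(`EReal`-valued, never `⊥`): if `yᵢ` minimizes `f(xᵢ, ·)` and
`d xᵢ = A*(A xᵢ + B yᵢ + c)`, then
`F x₁ ≥ F x₂ + ⟪d x₂, x₁ - x₂⟫ + (1/(2L))‖d x₁ - d x₂‖²` with `L = ‖A‖² > 0`. -/
theorem stmt_2 {H H₁ H₂ : Type*}
    [NormedAddCommGroup H] [InnerProductSpace ℝ H] [FiniteDimensional ℝ H]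
    [NormedAddCommGroup H₁] [InnerProductSpace ℝ H₁] [FiniteDimensional ℝ H₁]
    [NormedAddCommGroup H₂] [InnerProductSpace ℝ H₂] [FiniteDimensional ℝ H₂]
    (A : H₁ →L[ℝ] H) (B : H₂ →L[ℝ] H) (c : H) (g : H₂ → EReal)
    -- g is proper (never -∞, somewhere finite):
    (hg_bot : ∀ y, g y ≠ ⊥) (hg_proper : ∃ y, g y ≠ ⊤)
    -- g is convex:
    (hg_convex : ∀ y₁ y₂ : H₂, ∀ t : ℝ, 0 ≤ t → t ≤ 1 →
      g (t • y₁ + (1 - t) • y₂) ≤ (t : EReal) * g y₁ + ((1 - t : ℝ) : EReal) * g y₂)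
    -- g is lower semicontinuous:
    (hg_lsc : LowerSemicontinuous g)
    -- the joint functional f(x,y) = ½‖Ax + By + c‖² + g(y):
    (f : H₁ → H₂ → EReal)
    (hf : ∀ x y, f x y = (((1 / 2 : ℝ) * ‖A x + B y + c‖ ^ 2 : ℝ) : EReal) + g y)
    (x₁ x₂ : H₁) (y₁ y₂ : H₂)
    -- y₁ minimizes f(x₁, ·) and y₂ minimizes f(x₂, ·), with finite values:
    (hy₁ : ∀ y, f x₁ y₁ ≤ f x₁ y) (hy₂ : ∀ y, f x₂ y₂ ≤ f x₂ y)
    (hy₁fin : g y₁ ≠ ⊤) (hy₂fin : g y₂ ≠ ⊤)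
    (L : ℝ) (hLdef : L = ‖A‖ ^ 2) (hLpos : 0 < L) :
    (f x₁ y₁).toReal ≥ (f x₂ y₂).toReal
      + ⟪A.adjoint (A x₂ + B y₂ + c), x₁ - x₂⟫
      + (1 / (2 * L)) * ‖A.adjoint (A x₁ + B y₁ + c) - A.adjoint (A x₂ + B y₂ + c)‖ ^ 2 :=
  stmt_2_general A B c g hg_bot hg_convex f hf x₁ x₂ y₁ y₂ hy₂ hy₁fin hy₂fin L hLdef hLpos
end

section
/- Let $X = \mathbb{R}^{\mathcal{T}}$ and $Y = \mathbb{R}^{\mathcal{I}}$ be Euclidean spaces where each index $T \in \mathcal{T}$ (pixels) is associated with at most four indices $e_1(T), e_2(T), e_3(T), e_4(T) \in \mathcal{I}$ (edges), each edge index is associated to at most two pixels, and $\mathrm{div}: Y \to X$ is defined by $(\mathrm{div}\, \mathbf{p})_T = -p_{e_1(T)} + p_{e_2(T)} - p_{e_3(T)} + p_{e_4(T)}$ (with missing edges contributing $0$). Then $\|\mathrm{div}\, \mathbf{p}\|_X^2 \le 8 \|\mathbf{p}\|_Y^2$ for all $\mathbf{p} \in Y$, i.e., the operator norm satisfies $\|\mathrm{div}\|^2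 \le 8$. -/
open Finset

/-- Norm bound `‖div‖² ≤ 8` for the discrete (Raviart–Thomas) divergence:
pixels `T`, edges `I`, each pixel has at most four (signed) edges
(`e t j = none` for missing/boundary edges, contributing `0`), and each edge
is associated to at most two pixels.  Then
`∑_T ((div p)_T)² ≤ 8 ∑_i p_i²`. -/
theorem stmt_5 {T I : Type*} [Fintype T] [Fintype I] [DecidableEq I]
    (e : T → Fin 4 → Option I)
    -- each edge is shared by at most two pixels:
    (hshare : ∀ i : I,
      (Finset.univ.filter (fun tj : T × Fin 4 => e tj.1 tj.2 = some i)).card ≤ 2)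
    -- the signs (-1, +1, -1, +1) of the four edges of a pixel:
    (sgn : Fin 4 → ℝ) (hsgn : sgn = ![-1, 1, -1, 1])
    -- the divergence (div p)_T = -p_{e₁(T)} + p_{e₂(T)} - p_{e₃(T)} + p_{e₄(T)}:
    (div : (I → ℝ) → T → ℝ)
    (hdiv : ∀ p t, div p t = ∑ j : Fin 4, sgn j * (Option.elim (e t j) 0 p))
    (p : I → ℝ) :
    ∑ t : T, (div p t) ^ 2 ≤ 8 * ∑ i : I, (p i) ^ 2 := by
  set q : T × Fin 4 → ℝ := fun tj => (Option.elim (e tj.1 tj.2) 0 p) ^ 2 with hq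
  have hstep : ∀ t : T, (div p t) ^ 2 ≤ 4 * ∑ j : Fin 4, q (t, j) := by
    intro t
    rw [hdiv, hsgn]
    simp only [hq, Fin.sum_univ_four]
    set a := Option.elim (e t 0) 0 p
    set b := Option.elim (e t 1) 0 p
    set c := Option.elim (e t 2) 0 p
    set d := Option.elim (e t 3) 0 p
    have h0 : (![-1, 1, -1, 1] : Fin 4 → ℝ) 0 = -1 := rfl
    have h1 : (![-1, 1, -1, 1] : Fin 4 → ℝ) 1 = 1 := rfl
    have h2 : (![-1, 1, -1, 1] : Fin 4 → ℝ) 2 = -1 := rfl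
    have h3 : (![-1, 1, -1, 1] : Fin 4 → ℝ) 3 = 1 := rfl
    rw [h0, h1, h2, h3]
    nlinarith [sq_nonneg (a - b), sq_nonneg (a - c), sq_nonneg (a - d),
      sq_nonneg (b - c), sq_nonneg (b - d), sq_nonneg (c - d),
      sq_nonneg (a + b), sq_nonneg (c + d), sq_nonneg (a - b + c - d)]
  have hcount : ∑ tj : T × Fin 4, q tj ≤ 2 * ∑ i : I, (p i) ^ 2 := by
    have hfib : ∑ tj : T × Fin 4, q tj
        = ∑ o : Option I, ∑ tj ∈ univ.filter (fun tj : T × Fin 4 => e tj.1 tj.2 = o), q tj :=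
      (Finset.sum_fiberwise univ (fun tj : T × Fin 4 => e tj.1 tj.2) q).symm
    rw [hfib, Fintype.sum_option]
    have hnone : ∑ tj ∈ univ.filter (fun tj : T × Fin 4 => e tj.1 tj.2 = none), q tj = 0 := by
      apply Finset.sum_eq_zero
      intro tj htj
      simp only [Finset.mem_filter] at htj
      simp [hq, htj.2]
    rw [hnone, zero_add, Finset.mul_sum]
    apply Finset.sum_le_sum
    intro i _
    have : ∑ tj ∈ univ.filter (fun tj : T × Fin 4 => e tj.1 tj.2 = some i), q tj
        = (univ.filter (fun tj : T × Fin 4 => e tj.1 tj.2 = some i)).card * (p i) ^ 2 := by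
      have hcg : ∀ tj ∈ univ.filter (fun tj : T × Fin 4 => e tj.1 tj.2 = some i),
          q tj = (p i) ^ 2 := by
        intro tj htj
        simp only [Finset.mem_filter] at htj
        simp [hq, htj.2]
      rw [Finset.sum_congr rfl hcg, Finset.sum_const, nsmul_eq_mul]
    rw [this]
    have hc := hshare i
    have : ((univ.filter (fun tj : T × Fin 4 => e tj.1 tj.2 = some i)).card : ℝ) ≤ 2 := by
      exact_mod_cast hc
    nlinarith [sq_nonneg (p i)]
  calc ∑ t : T, (div p t) ^ 2 ≤ ∑ t : T, 4 * ∑ j : Fin 4, q (t, j) :=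
        Finset.sum_le_sum fun t _ => hstep t
    _ = 4 * ∑ tj : T × Fin 4, q tj := by rw [← Finset.mul_sum, Fintype.sum_prod_type]
    _ ≤ 4 * (2 * ∑ i : I, (p i) ^ 2) := by linarith
    _ = 8 * ∑ i : I, (p i) ^ 2 := by ring
end
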